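/- Let X be a real-valued square-integrable random variable that is not almost surely constant, and let α > β > 0. Every minimizer t of the expectile-loss risk φ(t) = E[α·(max(X − t, 0))² + β·(max(t − X, 0))²] satisfies the strict inequality t > E[X]. -/

import Mathlib

/-!
For fixed `x`, the loss `t ↦ α (x - t)⁺² + β (t - x)⁺²` has derivative
`-2α (x - t)⁺ + 2β (t - x)⁺`, which is `2α`-Lipschitz when `β ≤ α`; integrating the resulting
descent inequality shows that at a minimizer `t` the one-sided first-order condition
`α E[(X - t)⁺] ≤ β E[(t - X)⁺]` holds. Since `E[X] - t = E[(X - t)⁺] - E[(t - X)⁺]`, this forces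
`E[X] < t` when `β < α`, unless both parts vanish, i.e. `X = t` almost surely.
-/

open MeasureTheory

def expectileLoss (α β x t : ℝ) : ℝ :=
  α * (max (x - t) 0) ^ 2 + β * (max (t - x) 0) ^ 2

theorem expectileLoss_add_le {α β : ℝ} (hβα : β ≤ α) (x t h : ℝ) :
    expectileLoss α β x (t + h) ≤
      expectileLoss α β x t - 2 * h * (α * max (x - t) 0 - β * max (t - x) 0) + α * h ^ 2 := by
  have hγ : 0 ≤ α - β := sub_nonneg.2 hβα
  unfold expectileLoss
  rcases le_total x t with hxt | hxt <;> rcases le_total x (t + h) with hxth | hxth <;>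
    simp only [max_eq_left, max_eq_right, sub_nonneg, sub_nonpos, hxt, hxth] <;>
    nlinarith [mul_nonneg hγ (sq_nonneg h), mul_nonneg hγ (sq_nonneg (t + h - x)),
      mul_nonneg hγ (mul_nonneg (sub_nonneg.2 hxt) (sub_nonneg.2 hxth))]

theorem nonpos_of_forall_pos_mul_le_mul_sq {D a : ℝ} (h : ∀ ε > 0, ε * D ≤ a * ε ^ 2) :
    D ≤ 0 := by
  by_contra! hD
  set ε := D / (|a| + 1)
  have hε : 0 < ε := by positivity
  have hεD : ε * (|a| + 1) = D := div_mul_cancel₀ D (by positivity)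
  nlinarith [h ε hε, mul_le_mul_of_nonneg_right (le_abs_self a) (sq_nonneg ε)]

section Integral

variable {Ω : Type*} [MeasurableSpace Ω] {μ : Measure Ω} {X : Ω → ℝ}

theorem MeasureTheory.Integrable.max_sub_const_zero [IsFiniteMeasure μ] (hX : Integrable X μ)
    (t : ℝ) :
    Integrable (fun ω => max (X ω - t) 0) μ :=
  (hX.sub (integrable_const t)).pos_part

theorem MeasureTheory.Integrable.max_const_sub_zero [IsFiniteMeasure μ] (hX : Integrable X μ)
    (t : ℝ) :
    Integrable (fun ω => max (t - X ω) 0) μ :=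
  ((integrable_const t).sub hX).pos_part

theorem integrable_expectileLoss [IsFiniteMeasure μ] (hX : MemLp X 2 μ) (α β t : ℝ) :
    Integrable (fun ω => expectileLoss α β (X ω) t) μ :=
  (((hX.sub (memLp_const t)).pos_part.integrable_sq).const_mul α).add
    ((((memLp_const t).sub hX).pos_part.integrable_sq).const_mul β)

theorem integral_expectileLoss_add_le [IsFiniteMeasure μ] (hX : MemLp X 2 μ) {α β : ℝ}
    (hβα : β ≤ α) (t h : ℝ) :
    ∫ ω, expectileLoss α β (X ω) (t + h) ∂μ ≤
      ∫ ω, expectileLoss α β (X ω) t ∂μ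
        - 2 * h * (α * ∫ ω, max (X ω - t) 0 ∂μ - β * ∫ ω, max (t - X ω) 0 ∂μ)
        + α * h ^ 2 * μ.real Set.univ := by
  have hpos := (hX.integrable one_le_two).max_sub_const_zero t
  have hneg := (hX.integrable one_le_two).max_const_sub_zero t
  have hdrift : Integrable (fun ω => α * max (X ω - t) 0 - β * max (t - X ω) 0) μ :=
    (hpos.const_mul α).sub (hneg.const_mul β)
  have hL := integrable_expectileLoss hX α β t
  have hlin : Integrable (fun ω => expectileLoss α β (X ω) t
      - 2 * h * (α * max (X ω - t) 0 - β * max (t - X ω) 0)) μ :=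
    hL.sub (hdrift.const_mul _)
  calc ∫ ω, expectileLoss α β (X ω) (t + h) ∂μ
      ≤ ∫ ω, (expectileLoss α β (X ω) t
          - 2 * h * (α * max (X ω - t) 0 - β * max (t - X ω) 0) + α * h ^ 2) ∂μ :=
        integral_mono (integrable_expectileLoss hX α β (t + h))
          (hlin.add (integrable_const _))
          fun ω => expectileLoss_add_le hβα (X ω) t h
    _ = _ := by
        rw [integral_add hlin (integrable_const _),
          integral_sub hL (hdrift.const_mul _), integral_const_mul,
          integral_sub (hpos.const_mul α) (hneg.const_mul β), integral_const_mul,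
          integral_const_mul, integral_const, smul_eq_mul, mul_comm (μ.real _)]

theorem expectile_first_order_le [IsFiniteMeasure μ] (hX : MemLp X 2 μ) {α β : ℝ}
    (hβα : β ≤ α) {t : ℝ}
    (hmin : ∀ s, ∫ ω, expectileLoss α β (X ω) t ∂μ ≤ ∫ ω, expectileLoss α β (X ω) s ∂μ) :
    α * ∫ ω, max (X ω - t) 0 ∂μ ≤ β * ∫ ω, max (t - X ω) 0 ∂μ := by
  have := nonpos_of_forall_pos_mul_le_mul_sq
    (D := 2 * (α * ∫ ω, max (X ω - t) 0 ∂μ - β * ∫ ω, max (t - X ω) 0 ∂μ))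
    (a := α * μ.real Set.univ) fun ε _ => by
      linarith [(hmin (t + ε)).trans (integral_expectileLoss_add_le hX hβα t ε)]
  linarith

theorem integral_max_sub_sub_integral_max [IsProbabilityMeasure μ] (hX : Integrable X μ)
    (t : ℝ) :
    ∫ ω, max (X ω - t) 0 ∂μ - ∫ ω, max (t - X ω) 0 ∂μ = ∫ ω, X ω ∂μ - t := by
  rw [← integral_sub (hX.max_sub_const_zero t) (hX.max_const_sub_zero t)]
  calc ∫ ω, (max (X ω - t) 0 - max (t - X ω) 0) ∂μ = ∫ ω, (X ω - t) ∂μ :=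
        integral_congr_ae <| .of_forall fun ω => by
          simpa only [neg_sub] using max_zero_sub_max_neg_zero_eq_self (X ω - t)
    _ = ∫ ω, X ω ∂μ - t := by simp [integral_sub hX (integrable_const t)]

theorem ae_eq_const_of_integral_max_eq_zero [IsFiniteMeasure μ] (hX : Integrable X μ) {t : ℝ}
    (hpos : ∫ ω, max (X ω - t) 0 ∂μ = 0) (hneg : ∫ ω, max (t - X ω) 0 ∂μ = 0) :
    X =ᵐ[μ] fun _ => t := by
  have hpos' := (integral_eq_zero_iff_of_nonneg (fun ω => le_max_right _ _)
    (hX.max_sub_const_zero t)).1 hpos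
  have hneg' := (integral_eq_zero_iff_of_nonneg (fun ω => le_max_right _ _)
    (hX.max_const_sub_zero t)).1 hneg
  filter_upwards [hpos', hneg'] with ω h₁ h₂
  simp only [Pi.zero_apply, max_eq_right_iff, sub_nonpos] at h₁ h₂
  exact le_antisymm h₁ h₂

end Integral

/-- If X is not a.s. constant and α > β, every minimizer of the
expectile-loss risk satisfies t > E[X] strictly. -/
theorem expectile_risk_min_gt_mean
    {Ω : Type*} [MeasurableSpace Ω] (μ : Measure Ω) [IsProbabilityMeasure μ]
    (X : Ω → ℝ) (hX : MemLp X 2 μ)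
    (hnc : ¬ ∃ k : ℝ, X =ᵐ[μ] fun _ => k)
    (α β : ℝ) (hβ : 0 < β) (hαβ : β < α)
    (φ : ℝ → ℝ)
    (hφ : ∀ t, φ t = ∫ ω, (α * (max (X ω - t) 0) ^ 2 + β * (max (t - X ω) 0) ^ 2) ∂μ) :
    ∀ t : ℝ, (∀ s : ℝ, φ t ≤ φ s) → (∫ ω, X ω ∂μ) < t := by
  intro t hmin
  by_contra! hle
  have hX1 : Integrable X μ := hX.integrable one_le_two
  have hfoc := expectile_first_order_le hX hαβ.le (t := t)
    (by simpa only [hφ, expectileLoss] using hmin)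
  have hdecomp := integral_max_sub_sub_integral_max hX1 t
  have hpos_nonneg : 0 ≤ ∫ ω, max (X ω - t) 0 ∂μ := integral_nonneg fun _ => le_max_right _ _
  have hneg_nonneg : 0 ≤ ∫ ω, max (t - X ω) 0 ∂μ := integral_nonneg fun _ => le_max_right _ _
  have hpos : ∫ ω, max (X ω - t) 0 ∂μ = 0 := by
    nlinarith [mul_nonneg hβ.le (hdecomp ▸ sub_nonneg.2 hle)]
  exact hnc ⟨t, ae_eq_const_of_integral_max_eq_zero hX1 hpos (by linarith)⟩
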